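/- The function u(x,y) = (ℓ/2)·log(x² + y²) on the half-plane {(x,y) : y > 0} satisfies the minimal vertical graph equation (1 + y²u_x²)u_yy + (1 + y²u_y²)u_xx − 2y²u_x u_y u_xy − y u_y(u_x² + u_y²) = 0, for every real constant ℓ. -/

import Mathlib

noncomputable def px (u : ℝ → ℝ → ℝ) (x y : ℝ) : ℝ := deriv (fun x' => u x' y) x
noncomputable def py (u : ℝ → ℝ → ℝ) (x y : ℝ) : ℝ := deriv (fun y' => u x y') y
noncomputable def pxx (u : ℝ → ℝ → ℝ) (x y : ℝ) : ℝ := deriv (fun x' => px u x' y) x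
noncomputable def pyy (u : ℝ → ℝ → ℝ) (x y : ℝ) : ℝ := deriv (fun y' => py u x y') y
noncomputable def pxy (u : ℝ → ℝ → ℝ) (x y : ℝ) : ℝ := deriv (fun y' => px u x y') y

/-- The minimal vertical graph equation in the upper half-plane model of `ℍ²`. -/
def MinimalEqHalfPlane (u : ℝ → ℝ → ℝ) (x y : ℝ) : Prop :=
  (1 + y ^ 2 * (px u x y) ^ 2) * pyy u x y + (1 + y ^ 2 * (py u x y) ^ 2) * pxx u x y
    - 2 * y ^ 2 * px u x y * py u x y * pxy u x y
    - y * py u x y * ((px u x y) ^ 2 + (py u x y) ^ 2) = 0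

/-! `u` is harmonic, so the terms of the equation without a factor `y²` cancel. With
`r² = x² + y²` one has `∇u = ℓ (x, y) / r²`, and the remaining terms are
`y² (u_x² u_yy + u_y² u_xx − 2 u_x u_y u_xy) = ℓ³ y² / r⁴ = y u_y |∇u|²`.
Since `u` is symmetric in `x` and `y`, its `y`-derivatives are read off from its `x`-derivatives. -/

open Real Filter Topology

lemma py_eq_px_swap {u : ℝ → ℝ → ℝ} (hu : ∀ x y, u x y = u y x) (x y : ℝ) :
    py u x y = px u y x := by
  simp only [py, px, hu x]

lemma pyy_eq_pxx_swap {u : ℝ → ℝ → ℝ} (hu : ∀ x y, u x y = u y x) (x y : ℝ) :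
    pyy u x y = pxx u y x := by
  simp only [pyy, pxx, py_eq_px_swap hu x]

noncomputable def logRadial (ℓ x y : ℝ) : ℝ := ℓ / 2 * log (x ^ 2 + y ^ 2)

lemma logRadial_symm (ℓ x y : ℝ) : logRadial ℓ x y = logRadial ℓ y x := by
  rw [logRadial, logRadial, add_comm]

section

variable (ℓ : ℝ) {x y : ℝ}

lemma px_logRadial (h : x ^ 2 + y ^ 2 ≠ 0) : px (logRadial ℓ) x y = ℓ * x / (x ^ 2 + y ^ 2) := by
  have hd := (((hasDerivAt_pow 2 x).add_const (y ^ 2)).log h).const_mul (ℓ / 2)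
  unfold px logRadial
  rw [hd.deriv]
  field_simp
  ring

lemma pxx_logRadial (h : x ^ 2 + y ^ 2 ≠ 0) :
    pxx (logRadial ℓ) x y = ℓ * (y ^ 2 - x ^ 2) / (x ^ 2 + y ^ 2) ^ 2 := by
  have hpx : (fun x' => px (logRadial ℓ) x' y) =ᶠ[𝓝 x] fun x' => ℓ * x' / (x' ^ 2 + y ^ 2) := by
    have hc : ContinuousAt (fun x' : ℝ => x' ^ 2 + y ^ 2) x := by fun_prop
    filter_upwards [hc.eventually_ne h] with x' hx' using px_logRadial ℓ hx'
  have hd := ((hasDerivAt_id' x).const_mul ℓ).fun_div ((hasDerivAt_pow 2 x).add_const (y ^ 2)) h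
  rw [pxx, hpx.deriv_eq, hd.deriv]
  field_simp
  ring

lemma pxy_logRadial (h : x ^ 2 + y ^ 2 ≠ 0) :
    pxy (logRadial ℓ) x y = -2 * ℓ * x * y / (x ^ 2 + y ^ 2) ^ 2 := by
  have hpx : (fun y' => px (logRadial ℓ) x y') =ᶠ[𝓝 y] fun y' => ℓ * x / (x ^ 2 + y' ^ 2) := by
    have hc : ContinuousAt (fun y' : ℝ => x ^ 2 + y' ^ 2) y := by fun_prop
    filter_upwards [hc.eventually_ne h] with y' hy' using px_logRadial ℓ hy'
  have hd := (hasDerivAt_const y (ℓ * x)).fun_div ((hasDerivAt_pow 2 y).const_add (x ^ 2)) h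
  rw [pxy, hpx.deriv_eq, hd.deriv]
  field_simp
  ring

lemma minimalEqHalfPlane_logRadial (h : x ^ 2 + y ^ 2 ≠ 0) :
    MinimalEqHalfPlane (logRadial ℓ) x y := by
  have h' : y ^ 2 + x ^ 2 ≠ 0 := by rwa [add_comm]
  rw [MinimalEqHalfPlane, py_eq_px_swap (logRadial_symm ℓ), pyy_eq_pxx_swap (logRadial_symm ℓ),
    px_logRadial ℓ h, px_logRadial ℓ h', pxx_logRadial ℓ h, pxx_logRadial ℓ h',
    pxy_logRadial ℓ h]
  field_simp
  ring

end

theorem stmt_8 (ℓ : ℝ) :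
    ∀ x y : ℝ, 0 < y →
      MinimalEqHalfPlane (fun x y => (ℓ / 2) * Real.log (x ^ 2 + y ^ 2)) x y := by
  intro x y hy
  exact minimalEqHalfPlane_logRadial ℓ (by positivity)
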